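/- Let R be a commutative ring and q ∈ R. For all natural numbers n and ℓ, the q-Bell numbers satisfy Katriel's q-analogue of Spivey's Bell number formula: B_{n+ℓ,q} = \sum_{j=0}^{ℓ} \sum_{k=0}^{n} S_q(ℓ,j) * C(n,k) * ([j]_q)^{n-k} * q^{j*k} * B_{k,q} (with the convention 0^0 = 1). -/

import Mathlib

/-- The q-integer [n]_q. -/
def qInt {R : Type*} [CommRing R] (q : R) (n : ℕ) : R :=
  ∑ i ∈ Finset.range n, q ^ i

/-- The q-Stirling numbers of the second kind. -/
def qStirling {R : Type*} [CommRing R] (q : R) : ℕ → ℕ → R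
  | 0, 0 => 1
  | 0, _ + 1 => 0
  | _ + 1, 0 => 0
  | n + 1, k + 1 => q ^ k * qStirling q n k + qInt q (k + 1) * qStirling q n (k + 1)

/-- The q-Bell numbers. -/
def qBell {R : Type*} [CommRing R] (q : R) (n : ℕ) : R :=
  ∑ k ∈ Finset.range (n + 1), qStirling q n k

/-!
Both sides of the refined identity `S_q(n + ℓ, m) = ∑_j S_q(ℓ, j) T_j(n, m)`, with
`T_j(n, m) = ∑_k C(n, k) [j]_q^(n-k) q^(j k) S_q(k, m - j)`, satisfy the q-Stirling recurrence in
`(n, m)`, so they agree because they agree at `n = 0`. For `T_j` the recurrence follows from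
Pascal's rule together with `[m + 1]_q = [j]_q + q^j [m + 1 - j]_q`. Summing over `m` gives the
formula for the q-Bell numbers.
-/

open Finset

section

variable {R : Type*} [CommRing R] (q : R)

lemma qInt_add (a b : ℕ) : qInt q (a + b) = qInt q a + q ^ a * qInt q b := by
  simp only [qInt, sum_range_add, pow_add, mul_sum]

lemma qStirling_zero (m : ℕ) : qStirling q 0 m = if m = 0 then 1 else 0 := by
  cases m <;> rfl

lemma qStirling_succ_zero (n : ℕ) : qStirling q (n + 1) 0 = 0 := rfl

lemma qStirling_succ_succ (n k : ℕ) :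
    qStirling q (n + 1) (k + 1) =
      q ^ k * qStirling q n k + qInt q (k + 1) * qStirling q n (k + 1) := rfl

lemma qStirling_eq_zero_of_lt {n k : ℕ} (h : n < k) : qStirling q n k = 0 := by
  induction n generalizing k with
  | zero => obtain ⟨k, rfl⟩ := Nat.exists_eq_add_one_of_ne_zero (by omega : k ≠ 0); rfl
  | succ n ih =>
    obtain ⟨k, rfl⟩ := Nat.exists_eq_add_one_of_ne_zero (by omega : k ≠ 0)
    rw [qStirling_succ_succ, ih (by omega), ih (by omega), mul_zero, mul_zero, add_zero]

lemma sum_range_qStirling_of_lt {k M : ℕ} (h : k < M) :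
    ∑ i ∈ range M, qStirling q k i = qBell q k := by
  obtain ⟨r, rfl⟩ : ∃ r, M = k + 1 + r := ⟨M - (k + 1), by omega⟩
  rw [sum_range_add, qBell, add_eq_left]
  exact sum_eq_zero fun i _ => qStirling_eq_zero_of_lt q (by omega)

def shiftedQStirling (j k m : ℕ) : R :=
  if j ≤ m then qStirling q k (m - j) else 0

lemma shiftedQStirling_of_lt {j m : ℕ} (k : ℕ) (h : m < j) : shiftedQStirling q j k m = 0 :=
  if_neg (by omega)

lemma shiftedQStirling_add_left (j k i : ℕ) : shiftedQStirling q j k (j + i) = qStirling q k i := by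
  rw [shiftedQStirling, if_pos (Nat.le_add_right j i), Nat.add_sub_cancel_left]

lemma shiftedQStirling_self (j k : ℕ) : shiftedQStirling q j k j = qStirling q k 0 := by
  simpa using shiftedQStirling_add_left q j k 0

lemma sum_range_shiftedQStirling {j k N : ℕ} (h : j + k < N) :
    ∑ m ∈ range N, shiftedQStirling q j k m = qBell q k := by
  obtain ⟨M, rfl⟩ := Nat.exists_eq_add_of_le (by omega : j ≤ N)
  rw [sum_range_add, sum_eq_zero fun m hm => shiftedQStirling_of_lt q k (mem_range.mp hm),
    zero_add]
  simp only [shiftedQStirling_add_left]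
  exact sum_range_qStirling_of_lt q (by omega)

lemma qInt_mul_shiftedQStirling_add (j k m : ℕ) :
    qInt q j * shiftedQStirling q j k (m + 1) + q ^ j * shiftedQStirling q j (k + 1) (m + 1) =
      q ^ m * shiftedQStirling q j k m + qInt q (m + 1) * shiftedQStirling q j k (m + 1) := by
  rcases lt_trichotomy j (m + 1) with hj | rfl | hj
  · obtain ⟨i, rfl⟩ := Nat.exists_eq_add_of_le (Nat.le_of_lt_succ hj)
    have hqInt : qInt q (j + i + 1) = qInt q j + q ^ j * qInt q (i + 1) := by
      rw [add_assoc, qInt_add]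
    simp only [add_assoc, shiftedQStirling_add_left] at hqInt ⊢
    rw [hqInt, qStirling_succ_succ, pow_add]
    ring
  · rw [shiftedQStirling_of_lt q k (Nat.lt_succ_self m), shiftedQStirling_self,
      shiftedQStirling_self, qStirling_succ_zero]
    ring
  · simp only [shiftedQStirling_of_lt q _ hj, shiftedQStirling_of_lt q _ (by omega : m < j)]
    ring

lemma sum_range_succ_choose_mul_pow (a b : R) (g : ℕ → R) (n : ℕ) :
    ∑ k ∈ range (n + 2), ((n + 1).choose k : R) * a ^ (n + 1 - k) * b ^ k * g k =
      ∑ k ∈ range (n + 1), (n.choose k : R) * a ^ (n - k) * b ^ k * (a * g k + b * g (k + 1)) := by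
  have pascal := sum_choose_succ_mul (fun k e => a ^ e * b ^ k * g k) n
  simp only [← mul_assoc] at pascal
  rw [pascal, ← sum_add_distrib]
  refine sum_congr rfl fun k hk => ?_
  rw [show n + 1 - k = n - k + 1 by have := mem_range.mp hk; omega]
  ring

def IsQStirlingRec (U : ℕ → ℕ → R) : Prop :=
  (∀ n, U (n + 1) 0 = 0) ∧
    ∀ n m, U (n + 1) (m + 1) = q ^ m * U n m + qInt q (m + 1) * U n (m + 1)

namespace IsQStirlingRec

variable {q}

lemma eq_of_zero {U V : ℕ → ℕ → R} (hU : IsQStirlingRec q U) (hV : IsQStirlingRec q V)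
    (h₀ : U 0 = V 0) : U = V := by
  funext n
  induction n with
  | zero => exact h₀
  | succ n ih =>
    funext m
    cases m with
    | zero => rw [hU.1, hV.1]
    | succ m => rw [hU.2, hV.2, ih]

lemma sum {ι : Type*} (s : Finset ι) (c : ι → R) {U : ι → ℕ → ℕ → R}
    (hU : ∀ j ∈ s, IsQStirlingRec q (U j)) :
    IsQStirlingRec q fun n m => ∑ j ∈ s, c j * U j n m := by
  constructor
  · intro n
    exact sum_eq_zero fun j hj => by rw [(hU j hj).1, mul_zero]
  · intro n m
    simp only [mul_sum, ← sum_add_distrib]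
    refine sum_congr rfl fun j hj => ?_
    rw [(hU j hj).2]
    ring

end IsQStirlingRec

lemma isQStirlingRec_qStirling_add (ℓ : ℕ) :
    IsQStirlingRec q fun n m => qStirling q (n + ℓ) m := by
  refine ⟨fun n => ?_, fun n m => ?_⟩ <;> dsimp only <;> rw [Nat.add_right_comm] <;> rfl

def spiveyTerm (j n m : ℕ) : R :=
  ∑ k ∈ range (n + 1),
    (n.choose k : R) * qInt q j ^ (n - k) * (q ^ j) ^ k * shiftedQStirling q j k m

lemma spiveyTerm_zero (j m : ℕ) : spiveyTerm q j 0 m = if m = j then 1 else 0 := by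
  simp only [spiveyTerm, zero_add, sum_range_one, Nat.choose_self, Nat.cast_one, Nat.sub_self,
    pow_zero, one_mul, shiftedQStirling, qStirling_zero]
  split_ifs <;> first | rfl | omega

lemma isQStirlingRec_spiveyTerm (j : ℕ) : IsQStirlingRec q (spiveyTerm q j) := by
  refine ⟨fun n => ?_, fun n m => ?_⟩
  · rw [spiveyTerm, sum_range_succ_choose_mul_pow]
    refine sum_eq_zero fun k _ => ?_
    cases j with
    | zero => simp [shiftedQStirling, qInt, qStirling_succ_zero]
    | succ j => simp [shiftedQStirling]
  · simp only [spiveyTerm, sum_range_succ_choose_mul_pow, qInt_mul_shiftedQStirling_add,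
      mul_sum, ← sum_add_distrib]
    refine sum_congr rfl fun k _ => ?_
    ring

lemma qStirling_add_eq_sum_spiveyTerm (n ℓ m : ℕ) :
    qStirling q (n + ℓ) m = ∑ j ∈ range (ℓ + 1), qStirling q ℓ j * spiveyTerm q j n m := by
  have h₀ : (fun m => qStirling q (0 + ℓ) m) =
      fun m => ∑ j ∈ range (ℓ + 1), qStirling q ℓ j * spiveyTerm q j 0 m := by
    funext m
    simp only [zero_add, spiveyTerm_zero, mul_ite, mul_one, mul_zero, sum_ite_eq, mem_range]
    split_ifs with hm
    · rfl
    · exact qStirling_eq_zero_of_lt q (by omega)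
  exact congrFun (congrFun ((isQStirlingRec_qStirling_add q ℓ).eq_of_zero
    (IsQStirlingRec.sum _ _ fun j _ => isQStirlingRec_spiveyTerm q j) h₀) n) m

lemma sum_range_spiveyTerm {j ℓ : ℕ} (n : ℕ) (hj : j ≤ ℓ) :
    ∑ m ∈ range (n + ℓ + 1), spiveyTerm q j n m =
      ∑ k ∈ range (n + 1), (n.choose k : R) * qInt q j ^ (n - k) * (q ^ j) ^ k * qBell q k := by
  simp only [spiveyTerm]
  rw [sum_comm]
  refine sum_congr rfl fun k hk => ?_
  rw [← mul_sum, sum_range_shiftedQStirling q (by have := mem_range.mp hk; omega)]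

end

/-- Katriel's q-analogue of Spivey's Bell number formula. -/
theorem katriel_spivey_qBell {R : Type*} [CommRing R] (q : R) (n ℓ : ℕ) :
    qBell q (n + ℓ) =
      ∑ j ∈ Finset.range (ℓ + 1), ∑ k ∈ Finset.range (n + 1),
        qStirling q ℓ j * (Nat.choose n k : R) * (qInt q j) ^ (n - k) * q ^ (j * k) *
          qBell q k := by
  calc qBell q (n + ℓ)
      = ∑ m ∈ range (n + ℓ + 1), ∑ j ∈ range (ℓ + 1), qStirling q ℓ j * spiveyTerm q j n m :=
        sum_congr rfl fun m _ => qStirling_add_eq_sum_spiveyTerm q n ℓ m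
    _ = ∑ j ∈ range (ℓ + 1), qStirling q ℓ j * ∑ m ∈ range (n + ℓ + 1), spiveyTerm q j n m := by
        rw [sum_comm]
        simp only [mul_sum]
    _ = _ := by
        refine sum_congr rfl fun j hj => ?_
        rw [sum_range_spiveyTerm q n (Nat.le_of_lt_succ (mem_range.mp hj)), mul_sum]
        refine sum_congr rfl fun k _ => ?_
        rw [pow_mul]
        ring
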